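/- Let u be a profile of n voters' strict preference orders on a set A of p candidates (p ≥ 2). For a candidate a ∈ A, there exists a scoring s (i.e. s_0 ≤ s_1 ≤ … ≤ s_{p-1} with s_0 < s_{p-1}) such that a belongs to the de Borda winner set β_s(u) if and only if the score vector r(a) belongs to the weak Pareto boundary of the convex hull of the set R = {r(x) : x ∈ A} ⊆ ℝ^{p-1}. -/
import Mathlib


/-- The de Borda estimate of candidate `a` under scores `s` for profile `u`,
where `u i a : Fin p` is the 0-indexed rank of candidate `a` in the preference
of voter `i` (`0` = top place).  A candidate with 0-indexed rank `r` obtains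
`s (p-1-r)` points, i.e. `B_s(a) = ∑_i s_{p - rank_i(a)}` with 1-indexed ranks. -/
def bordaEstimate {n p : ℕ} (u : Fin n → Equiv.Perm (Fin p)) (s : Fin p → ℝ)
    (a : Fin p) : ℝ :=
  ∑ i : Fin n, s (Fin.rev (u i a))

/-- The score vector of candidate `a` : its `k`-th component (`k : Fin (p-1)`,
0-indexed) is the number of voters who place `a` within the top `k+1` places. -/
def scoreVec {n p : ℕ} (u : Fin n → Equiv.Perm (Fin p)) (a : Fin p) :
    Fin (p - 1) → ℝ :=
  fun k => ((Finset.univ : Finset (Fin n)).filter fun i => ((u i a : Fin p) : ℕ) ≤ (k : ℕ)).card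

/-- `f'` belongs to the Pareto boundary of `F`. -/
def ParetoOpt {m : ℕ} (F : Set (Fin m → ℝ)) (f' : Fin m → ℝ) : Prop :=
  f' ∈ F ∧ ¬ ∃ f ∈ F, (∀ j, f' j ≤ f j) ∧ ∃ j0, f' j0 < f j0

/-- `f''` belongs to the weak Pareto boundary of `F`. -/
def WeakParetoOpt {m : ℕ} (F : Set (Fin m → ℝ)) (f'' : Fin m → ℝ) : Prop :=
  f'' ∈ F ∧ ¬ ∃ f ∈ F, ∀ j, f'' j < f j

lemma point_eq {p : ℕ} (hp : 2 ≤ p) (s : Fin p → ℝ) (r : Fin p) :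
    s (Fin.rev r) = s ⟨0, by omega⟩ +
      ∑ k : Fin (p - 1), (if (r : ℕ) ≤ (k : ℕ)
        then s ⟨p - 1 - (k : ℕ), by omega⟩ - s ⟨p - 2 - (k : ℕ), by omega⟩ else 0) := by
  set S : ℕ → ℝ := fun j => s ⟨min j (p - 1), by omega⟩ with hSdef
  have hS : ∀ (j : ℕ) (h : j < p), s ⟨j, h⟩ = S j := by
    intro j h
    simp only [hSdef]
    congr 1
    exact Fin.ext (by simp; omega)
  have hr := r.isLt
  have hrev : s (Fin.rev r) = S (p - 1 - (r : ℕ)) := by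
    rw [show Fin.rev r = ⟨p - 1 - (r : ℕ), by omega⟩ from Fin.ext (by simp [Fin.val_rev]; omega)]
    exact hS _ _
  set g : ℕ → ℝ := fun k => if (r : ℕ) ≤ k then S (p - 1 - k) - S (p - 2 - k) else 0 with hg
  have hsum1 : (∑ k : Fin (p - 1), (if (r : ℕ) ≤ (k : ℕ)
        then s ⟨p - 1 - (k : ℕ), by omega⟩ - s ⟨p - 2 - (k : ℕ), by omega⟩ else 0))
      = ∑ k ∈ Finset.range (p - 1), g k := by
    rw [← Fin.sum_univ_eq_sum_range g (p - 1)]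
    refine Finset.sum_congr rfl fun k _ => ?_
    simp only [hg, hS]
  set F : ℕ → ℝ := fun k => S (p - 1 - (r : ℕ)) - S (p - 1 - max k (r : ℕ)) with hF
  have hsum2 : ∑ k ∈ Finset.range (p - 1), g k = F (p - 1) - F 0 := by
    rw [← Finset.sum_range_sub F (p - 1)]
    refine Finset.sum_congr rfl fun k hk => ?_
    rw [Finset.mem_range] at hk
    simp only [hg, hF]
    by_cases h : (r : ℕ) ≤ k
    · rw [if_pos h, Nat.max_eq_left (by omega), Nat.max_eq_left h,
        show p - 1 - (k + 1) = p - 2 - k from by omega]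
      ring
    · rw [if_neg h, Nat.max_eq_right (by omega), Nat.max_eq_right (by omega)]
      ring
  have hF1 : F (p - 1) = S (p - 1 - (r : ℕ)) - S 0 := by
    simp only [hF, Nat.max_eq_left (by omega : (r : ℕ) ≤ p - 1), Nat.sub_self]
  have hF0 : F 0 = 0 := by
    simp only [hF, Nat.max_eq_right (Nat.zero_le _), sub_self]
  rw [hrev, hsum1, hsum2, hF1, hF0, hS 0 (by omega)]
  ring

lemma borda_eq {n p : ℕ} (hp : 2 ≤ p) (u : Fin n → Equiv.Perm (Fin p)) (s : Fin p → ℝ)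
    (b : Fin p) :
    bordaEstimate u s b = n * s ⟨0, by omega⟩ +
      ∑ k : Fin (p - 1),
        (s ⟨p - 1 - (k : ℕ), by omega⟩ - s ⟨p - 2 - (k : ℕ), by omega⟩) * scoreVec u b k := by
  unfold bordaEstimate
  rw [Finset.sum_congr rfl fun i _ => point_eq hp s (u i b)]
  rw [Finset.sum_add_distrib, Finset.sum_const, Finset.card_univ, Fintype.card_fin,
    nsmul_eq_mul, Finset.sum_comm]
  congr 1
  refine Finset.sum_congr rfl fun k _ => ?_
  rw [Finset.sum_congr rfl fun i _ => show
      (if ((u i b : Fin p) : ℕ) ≤ (k : ℕ)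
        then s ⟨p - 1 - (k : ℕ), by omega⟩ - s ⟨p - 2 - (k : ℕ), by omega⟩ else 0)
      = (s ⟨p - 1 - (k : ℕ), by omega⟩ - s ⟨p - 2 - (k : ℕ), by omega⟩) *
        (if ((u i b : Fin p) : ℕ) ≤ (k : ℕ) then (1:ℝ) else 0) from by
      rw [mul_ite, mul_one, mul_zero]]
  rw [← Finset.mul_sum, Finset.sum_boole]
  rfl

lemma scoring_iff {n p : ℕ} (hp : 2 ≤ p) (u : Fin n → Equiv.Perm (Fin p)) (a : Fin p) :
    (∃ s : Fin p → ℝ, Monotone s ∧ s ⟨0, by omega⟩ < s ⟨p - 1, by omega⟩ ∧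
        ∀ b : Fin p, bordaEstimate u s b ≤ bordaEstimate u s a) ↔
      ∃ d : Fin (p - 1) → ℝ, (∀ k, 0 ≤ d k) ∧ 0 < ∑ k, d k ∧
        ∀ b : Fin p, ∑ k, d k * scoreVec u b k ≤ ∑ k, d k * scoreVec u a k := by
  constructor
  · rintro ⟨s, hm, hlt, hw⟩
    refine ⟨fun k => s ⟨p - 1 - (k : ℕ), by omega⟩ - s ⟨p - 2 - (k : ℕ), by omega⟩,
      fun k => sub_nonneg.2 (hm (by rw [Fin.mk_le_mk]; omega)), ?_, ?_⟩
    · have h0 := point_eq hp s ⟨0, by omega⟩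
      have hrev : Fin.rev (⟨0, by omega⟩ : Fin p) = ⟨p - 1, by omega⟩ :=
        Fin.ext (by simp [Fin.val_rev])
      rw [hrev] at h0
      simp only [Fin.val_mk, Nat.zero_le, if_true] at h0
      linarith
    · intro b
      have := hw b
      rw [borda_eq hp u s b, borda_eq hp u s a] at this
      linarith
  · rintro ⟨d, hd0, hdsum, hdle⟩
    set s : Fin p → ℝ := fun j => ∑ k : Fin (p - 1), if p - 1 - (j : ℕ) ≤ (k : ℕ) then d k else 0
      with hs
    have hmono : Monotone s := by
      intro j j' hjj'
      refine Finset.sum_le_sum fun k _ => ?_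
      have hv : (j : ℕ) ≤ (j' : ℕ) := hjj'
      split_ifs with h1 h2
      · exact le_refl _
      · exact absurd (le_trans (by omega) h1) h2
      · exact hd0 k
      · exact le_refl _
    have hs0 : s ⟨0, by omega⟩ = 0 :=
      Finset.sum_eq_zero fun k _ => if_neg (by have := k.isLt; simp only [Fin.val_mk]; omega)
    have hslast : s ⟨p - 1, by omega⟩ = ∑ k, d k :=
      Finset.sum_congr rfl fun k _ => if_pos (by simp only [Fin.val_mk]; omega)
    have hdv : ∀ k : Fin (p - 1),
        s ⟨p - 1 - (k : ℕ), by omega⟩ - s ⟨p - 2 - (k : ℕ), by omega⟩ = d k := by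
      intro k
      have hk := k.isLt
      show (∑ k' : Fin (p - 1), if p - 1 - (p - 1 - (k : ℕ)) ≤ (k' : ℕ) then d k' else 0)
          - (∑ k' : Fin (p - 1), if p - 1 - (p - 2 - (k : ℕ)) ≤ (k' : ℕ) then d k' else 0) = d k
      rw [← Finset.sum_sub_distrib]
      have hpt : ∀ k' : Fin (p - 1),
          (if p - 1 - (p - 1 - (k : ℕ)) ≤ (k' : ℕ) then d k' else 0)
            - (if p - 1 - (p - 2 - (k : ℕ)) ≤ (k' : ℕ) then d k' else 0)
          = if k' = k then d k' else 0 := by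
        intro k'
        rw [show p - 1 - (p - 1 - (k : ℕ)) = (k : ℕ) from by omega,
          show p - 1 - (p - 2 - (k : ℕ)) = (k : ℕ) + 1 from by omega]
        rcases eq_or_ne k' k with rfl | hne
        · rw [if_pos le_rfl, if_neg (by omega), if_pos rfl]; ring
        · have hvne : (k' : ℕ) ≠ (k : ℕ) := fun h => hne (Fin.ext h)
          rw [if_neg hne]
          split_ifs with h1 h2
          · ring
          · omega
          · omega
          · ring
      rw [Finset.sum_congr rfl fun k' _ => hpt k', Finset.sum_ite_eq' Finset.univ k d,
        if_pos (Finset.mem_univ k)]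
    refine ⟨s, hmono, by rw [hs0, hslast]; exact hdsum, fun b => ?_⟩
    rw [borda_eq hp u s b, borda_eq hp u s a]
    simp only [hdv]
    have := hdle b
    linarith

lemma pareto_iff {m : ℕ} {ι : Type*} (r : ι → (Fin m → ℝ)) (a : ι) :
    WeakParetoOpt (convexHull ℝ (Set.range r)) (r a) ↔
      ∃ d : Fin m → ℝ, (∀ k, 0 ≤ d k) ∧ 0 < ∑ k, d k ∧
        ∀ b, ∑ k, d k * r b k ≤ ∑ k, d k * r a k := by
  constructor
  · rintro ⟨hmem, hndom⟩
    set D : Set (Fin m → ℝ) := {g | ∀ j, r a j < g j} with hDdef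
    have hDeq : D = ⋂ j, {g : Fin m → ℝ | r a j < g j} := by
      ext g; simp [hDdef, Set.mem_iInter]
    have hDconv : Convex ℝ D := by
      rw [hDeq]
      exact convex_iInter fun j => convex_halfSpace_gt ⟨fun x y => rfl, fun c x => rfl⟩ _
    have hDopen : IsOpen D := by
      rw [hDeq]
      exact isOpen_iInter_of_finite fun j =>
        isOpen_lt continuous_const (continuous_apply j)
    have hdisj : Disjoint D (convexHull ℝ (Set.range r)) := by
      rw [Set.disjoint_left]
      intro g hgD hgC
      exact hndom ⟨g, hgC, hgD⟩
    obtain ⟨f, u₀, hfD, hfC⟩ :=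
      geometric_hahn_banach_open hDconv hDopen (convex_convexHull ℝ _) hdisj
    have hraC : u₀ ≤ f (r a) := hfC _ hmem
    have hmemD : ∀ g : Fin m → ℝ, (∀ j, 0 < g j) → (r a + g) ∈ D := by
      intro g hg j
      simpa using lt_add_of_pos_right (r a j) (hg j)
    have hone : f (fun _ => (1 : ℝ)) < 0 := by
      have h1 := hfD _ (hmemD (fun _ => (1 : ℝ)) fun j => one_pos)
      rw [map_add] at h1
      linarith
    set e : Fin m → (Fin m → ℝ) := fun j j' => if j = j' then 1 else 0 with he
    have hrepr : ∀ g : Fin m → ℝ, f g = ∑ j, g j * f (e j) := by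
      intro g
      conv_lhs => rw [pi_eq_sum_univ g]
      rw [map_sum]
      exact Finset.sum_congr rfl fun j _ => by rw [map_smul, smul_eq_mul]
    have hej : ∀ j, f (e j) ≤ 0 := by
      intro j
      by_contra hj
      push_neg at hj
      set t : ℝ := (1 - f (fun _ => (1 : ℝ))) / f (e j) with ht
      have htpos : 0 ≤ t := div_nonneg (by linarith) hj.le
      have hin : r a + ((fun _ => (1 : ℝ)) + t • e j) ∈ D := by
        refine hmemD _ fun j' => ?_
        simp only [Pi.add_apply, Pi.smul_apply, smul_eq_mul, he]
        split_ifs with h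
        · nlinarith
        · simp
      have h2 := hfD _ hin
      rw [map_add, map_add, map_smul, smul_eq_mul] at h2
      rw [ht, div_mul_cancel₀ _ (ne_of_gt hj)] at h2
      linarith
    have hra_le : f (r a) ≤ u₀ := by
      by_contra h
      push_neg at h
      set ε : ℝ := (f (r a) - u₀) / (-(f (fun _ => (1 : ℝ)))) with hε
      have hεpos : 0 < ε := div_pos (by linarith) (by linarith)
      have hin : r a + ε • (fun _ => (1 : ℝ)) ∈ D := by
        refine hmemD _ fun j => ?_
        simp only [Pi.smul_apply, smul_eq_mul, mul_one]
        exact hεpos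
      have h2 := hfD _ hin
      rw [map_add, map_smul, smul_eq_mul] at h2
      have hεone : ε * f (fun _ => (1 : ℝ)) = -(f (r a) - u₀) := by
        rw [hε, div_mul_eq_mul_div, div_eq_iff (by linarith : -(f fun _ => (1 : ℝ)) ≠ 0)]
        ring
      rw [hεone] at h2
      linarith
    refine ⟨fun j => -(f (e j)), fun j => by simpa using neg_nonneg.2 (hej j), ?_, ?_⟩
    · have hsum_e : ∑ j, e j = (fun _ => (1 : ℝ)) := by
        funext j'
        simp only [Finset.sum_apply, he]
        rw [Finset.sum_ite_eq' Finset.univ j' (fun _ => (1 : ℝ))]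
        simp
      have : ∑ j, -(f (e j)) = -(f (fun _ => (1 : ℝ))) := by
        rw [Finset.sum_neg_distrib, ← map_sum, hsum_e]
      rw [this]
      linarith
    · intro b
      have hb : u₀ ≤ f (r b) := hfC _ (subset_convexHull ℝ _ ⟨b, rfl⟩)
      have h1 : f (r a) ≤ f (r b) := le_trans hra_le hb
      rw [hrepr (r a), hrepr (r b)] at h1
      have h2 : ∀ g : ι, ∑ k, -(f (e k)) * r g k = -(∑ j, r g j * f (e j)) := by
        intro g
        rw [← Finset.sum_neg_distrib]
        exact Finset.sum_congr rfl fun k _ => by ring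
      rw [h2 b, h2 a]
      linarith
  · rintro ⟨d, hd0, hdsum, hdle⟩
    have lin : IsLinearMap ℝ (fun g : Fin m → ℝ => ∑ k, d k * g k) := by
      constructor
      · intro x y
        simp [mul_add, Finset.sum_add_distrib]
      · intro c x
        simp only [Pi.smul_apply, smul_eq_mul, Finset.mul_sum]
        exact Finset.sum_congr rfl fun k _ => by ring
    refine ⟨subset_convexHull ℝ _ ⟨a, rfl⟩, ?_⟩
    rintro ⟨f, hf, hdom⟩
    have hC' : convexHull ℝ (Set.range r) ⊆
        {g : Fin m → ℝ | ∑ k, d k * g k ≤ ∑ k, d k * r a k} :=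
      convexHull_min (by rintro _ ⟨b, rfl⟩; exact hdle b) (convex_halfSpace_le lin _)
    obtain ⟨k0, hk0⟩ : ∃ k, 0 < d k := by
      by_contra hcon
      push_neg at hcon
      have : ∑ k, d k ≤ 0 := Finset.sum_nonpos fun k _ => hcon k
      linarith
    have hlt : ∑ k, d k * r a k < ∑ k, d k * f k :=
      Finset.sum_lt_sum (fun k _ => mul_le_mul_of_nonneg_left (hdom k).le (hd0 k))
        ⟨k0, Finset.mem_univ _, mul_lt_mul_of_pos_left (hdom k0) hk0⟩
    exact absurd (hC' hf) (not_le.2 hlt)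

/-- There exists a scoring `s` (i.e. `s_0 ≤ s_1 ≤ ... ≤ s_{p-1}` with
`s_0 < s_{p-1}`) making candidate `a` a de Borda winner if and only if the score
vector `r(a)` belongs to the weak Pareto boundary of the convex hull of the set
`R` of all score vectors. -/
theorem eligibility_iff {n p : ℕ} (hn : 1 ≤ n) (hp : 2 ≤ p)
    (u : Fin n → Equiv.Perm (Fin p)) (a : Fin p) :
    (∃ s : Fin p → ℝ, Monotone s ∧ s ⟨0, by omega⟩ < s ⟨p - 1, by omega⟩ ∧
        ∀ b : Fin p, bordaEstimate u s b ≤ bordaEstimate u s a) ↔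
      WeakParetoOpt (convexHull ℝ (Set.range (scoreVec u))) (scoreVec u a) :=
  (scoring_iff hp u a).trans (pareto_iff (scoreVec u) a).symm
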